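/- With power cost c(z) = α·z^β (α > 0, β > 1) and K = n·r* where r* = ((R_r + R_a/n²)/(αβ))^{1/(β−1)}, the symmetric equilibrium exploitation rate x*_n solving x·c'(K·x) = (n−1)R_a/n² satisfies n·x*_n → (R_a/R_r)^{1/β} as n → ∞. -/

import Mathlib

/-!
The exponent `1 / (β - 1)` in `r*_n` cancels against the power `β - 1` of `K_n`, which leaves
`x*_n = ((1 - ε) · R_a / (R_r + R_a ε²) / n ^ β) ^ (1 / β)` with `ε = 1 / n`. So the factor `n`
cancels exactly, and what remains is continuous in `ε` at `0`.
-/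

open Filter Topology Real

theorem mul_rpow_one_div_rpow {m y p : ℝ} (hm : 0 ≤ m) (hy : 0 ≤ y) (hp : p ≠ 0) :
    (m * y ^ (1 / p)) ^ p = m ^ p * y := by
  rw [mul_rpow hm (rpow_nonneg hy _), one_div, rpow_inv_rpow hy hp]

theorem mul_div_rpow_self_rpow_one_div {m z β : ℝ} (hm : 0 < m) (hz : 0 ≤ z) (hβ : β ≠ 0) :
    m * (z / m ^ β) ^ (1 / β) = z ^ (1 / β) := by
  rw [div_rpow hz (rpow_nonneg hm.le _), one_div, rpow_rpow_inv hm.le hβ,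
    mul_div_cancel₀ _ hm.ne']

theorem mul_exploitation_rate_eq {α β R_r R_a m : ℝ} (hα : 0 < α) (hβ : 1 < β) (hRr : 0 < R_r)
    (hRa : 0 ≤ R_a) (hm : 1 ≤ m) :
    m * (((m - 1) * R_a / m ^ 2) /
        (α * β * (m * ((R_r + R_a / m ^ 2) / (α * β)) ^ (1 / (β - 1))) ^ (β - 1))) ^ (1 / β)
      = ((1 - 1 / m) * (R_a / (R_r + R_a * (1 / m) ^ 2))) ^ (1 / β) := by
  have hm0 : 0 < m := by linarith
  have hαβ : 0 < α * β := by positivity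
  have hB : 0 < R_r + R_a / m ^ 2 := by positivity
  have hmβ : m ^ β = m ^ (β - 1) * m := by
    rw [← rpow_add_one hm0.ne', sub_add_cancel]
  have hz : 0 ≤ (1 - 1 / m) * (R_a / (R_r + R_a * (1 / m) ^ 2)) := by
    have : 1 / m ≤ 1 := (div_le_one hm0).mpr hm
    have : 0 ≤ R_r + R_a * (1 / m) ^ 2 := by positivity
    apply mul_nonneg <;> [linarith; positivity]
  rw [mul_rpow_one_div_rpow hm0.le (div_nonneg hB.le hαβ.le) (by linarith),
    ← mul_div_rpow_self_rpow_one_div hm0 hz (by linarith)]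
  congr 2
  rw [hmβ]
  field_simp

/-- Asymptotics of the symmetric equilibrium exploitation rate for power cost:
with `r*_n = ((R_r + R_a/n²)/(αβ))^(1/(β−1))`, `K_n = n·r*_n`, and
`x*_n = (((n−1)R_a/n²)/(αβ·K_n^(β−1)))^(1/β)`, we have
`n·x*_n → (R_a/R_r)^(1/β)` as `n → ∞`. -/
theorem total_exploitation_rate_limit
    (α β R_r R_a : ℝ) (hα : 0 < α) (hβ : 1 < β) (hRr : 0 < R_r) (hRa : 0 < R_a) :
    Filter.Tendsto
      (fun n : ℕ =>
        (n : ℝ) *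
          ((((n : ℝ) - 1) * R_a / (n : ℝ) ^ 2) /
            (α * β * ((n : ℝ) * ((R_r + R_a / (n : ℝ) ^ 2) / (α * β)) ^ (1 / (β - 1)))
              ^ (β - 1))) ^ (1 / β))
      Filter.atTop (nhds ((R_a / R_r) ^ (1 / β))) := by
  set f : ℝ → ℝ := fun ε => ((1 - ε) * (R_a / (R_r + R_a * ε ^ 2))) ^ (1 / β)
  have hf : ContinuousAt f 0 := by
    have : R_r + R_a * 0 ^ 2 ≠ 0 := by simpa using hRr.ne'
    fun_prop (disch := first | assumption | positivity)
  have hf0 : f 0 = (R_a / R_r) ^ (1 / β) := by simp [f]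
  rw [← hf0]
  refine (hf.tendsto.comp tendsto_one_div_atTop_nhds_zero_nat).congr' ?_
  filter_upwards [eventually_ge_atTop 1] with n hn
  exact (mul_exploitation_rate_eq hα hβ hRr hRa.le (by exact_mod_cast hn)).symm
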